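/- Let ℓ ∈ ℕ and let ζ₁,...,ζ_N be i.i.d. mean-zero random vectors in ℝ^d with E(‖ζ₁‖^ℓ) < ∞. Then there exist polynomials R₁,...,R_{d^ℓ} of one variable, each of degree at most ⌊ℓ/2⌋ (with coefficients depending only on the joint moments of order ≤ ℓ of ζ₁), such that E((ζ₁ + ⋯ + ζ_N)^{⊗ℓ}) = (R₁(N),...,R_{d^ℓ}(N)) for all N ≥ ℓ. -/

import Mathlib

/-!
Expanding the product, `E ∏ₜ S_N(f t) = ∑_{g : Fin ℓ → Fin N} E ∏ₜ ζ_{g t}(f t)`. By independence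
and identical distribution, each term depends only on the partition `ker g` of the positions: it is
the product over the blocks of the joint moments of `ζ₁`. A partition with `k` blocks is the kernel
of exactly `N (N - 1) ⋯ (N - k + 1)` maps `g`, so the moment is a polynomial in `N`. Since `ζ₁` is
centred, partitions with a singleton block contribute zero, and the others have at most `ℓ / 2`
blocks.
-/

open Finset

namespace Setoid

variable {α β : Type*}

instance [Finite α] : Finite (Setoid α) :=
  Finite.of_injective (fun r : Setoid α ↦ (r : α → α → Prop)) fun _ _ h ↦
    Setoid.ext fun a b ↦ Iff.of_eq (congrFun (congrFun h a) b)

noncomputable instance [Finite α] : Fintype (Setoid α) := Fintype.ofFinite _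

def kerEqEquivEmbedding (r : Setoid α) : {g : α → β // ker g = r} ≃ (Quotient r ↪ β) where
  toFun g := ⟨Quotient.lift g.1 g.2.ge, (lift_injective_iff_ker_eq_of_le g.2.ge).2 g.2⟩
  invFun e := ⟨e ∘ Quotient.mk r, Setoid.ext fun a b ↦ by simp [ker_def, Quotient.eq]⟩
  left_inv _ := rfl
  right_inv e := by ext q; induction q using Quotient.inductionOn; rfl

theorem card_ker_eq [Fintype α] [DecidableEq α] [Fintype β] (r : Setoid α)
    [DecidablePred fun g : α → β ↦ ker g = r] :
    #{g : α → β | ker g = r} = (Fintype.card β).descFactorial (Nat.card (Quotient r)) := by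
  classical
  rw [← Fintype.card_subtype, Fintype.card_congr (kerEqEquivEmbedding r),
    Fintype.card_embedding_eq, Nat.card_eq_fintype_card]

theorem sum_comp_ker {M : Type*} [AddCommMonoid M] [Fintype α] [DecidableEq α] [Fintype β]
    (F : Setoid α → M) :
    ∑ g : α → β, F (ker g) =
      ∑ r : Setoid α, (Fintype.card β).descFactorial (Nat.card (Quotient r)) • F r := by
  classical
  rw [← sum_fiberwise univ ker]
  refine sum_congr rfl fun r _ ↦ ?_
  rw [sum_congr rfl fun g hg ↦ congrArg F (mem_filter.1 hg).2, sum_const, card_ker_eq]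

theorem two_mul_card_quotient_le [Fintype α] (r : Setoid α) (h : ∀ a, ∃ b ≠ a, r b a) :
    2 * Nat.card (Quotient r) ≤ Fintype.card α := by
  classical
  calc 2 * Nat.card (Quotient r) = ∑ _q : Quotient r, 2 := by
        simp [Nat.card_eq_fintype_card, mul_comm]
    _ ≤ ∑ q, #{a | Quotient.mk r a = q} := sum_le_sum fun q _ ↦ by
        induction q using Quotient.inductionOn with | h a =>
        obtain ⟨b, hba, hb⟩ := h a
        exact one_lt_card.2 ⟨a, by simp, b, by simpa [Quotient.eq] using hb, hba.symm⟩
    _ = Fintype.card α := (card_eq_sum_card_fiberwise fun _ _ ↦ mem_coe.2 (mem_univ _)).symm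

end Setoid

open MeasureTheory ProbabilityTheory

section Moments

variable {Ω E ι : Type*} {mΩ : MeasurableSpace Ω} [Fintype ι]
  {μ : Measure Ω} {X : Ω → E} {φ : ι → E → ℝ}

open Classical in
noncomputable def blockMoment (μ : Measure Ω) (X : Ω → E) (φ : ι → E → ℝ) (r : Setoid ι) : ℝ :=
  ∏ q : Quotient r, ∫ ω, ∏ t with Quotient.mk r t = q, φ t (X ω) ∂μ

/-- `descPochhammer ℝ k` evaluates at `N` to the number `N (N - 1) ⋯ (N - k + 1)` of maps into
`Fin N` with a given kernel having `k` classes. -/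
noncomputable def momentPolynomial (μ : Measure Ω) (X : Ω → E) (φ : ι → E → ℝ) :
    Polynomial ℝ :=
  ∑ r : Setoid ι, blockMoment μ X φ r • descPochhammer ℝ (Nat.card (Quotient r))

theorem blockMoment_eq_zero (hmean : ∀ t, ∫ ω, φ t (X ω) ∂μ = 0) {r : Setoid ι} {t : ι}
    (ht : ∀ s, r s t → s = t) : blockMoment μ X φ r = 0 := by
  classical
  have hblock : ({s | Quotient.mk r s = Quotient.mk r t} : Finset ι) = {t} := by
    ext s; simpa [Quotient.eq] using ⟨ht s, fun h ↦ h ▸ r.refl t⟩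
  refine prod_eq_zero (mem_univ (Quotient.mk r t)) ?_
  simpa only [hblock, prod_singleton] using hmean t

theorem natDegree_momentPolynomial_le (hmean : ∀ t, ∫ ω, φ t (X ω) ∂μ = 0) :
    (momentPolynomial μ X φ).natDegree ≤ Fintype.card ι / 2 := by
  refine Polynomial.natDegree_sum_le_of_forall_le _ _ fun r _ ↦ ?_
  by_cases hr : blockMoment μ X φ r = 0
  · simp [hr]
  have hpair : ∀ t, ∃ s ≠ t, r s t := by
    by_contra! h
    obtain ⟨t, ht⟩ := h
    exact hr (blockMoment_eq_zero hmean fun s hs ↦ by_contra fun hst ↦ ht s hst hs)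
  calc _ ≤ (descPochhammer ℝ (Nat.card (Quotient r))).natDegree := Polynomial.natDegree_smul_le _ _
    _ = Nat.card (Quotient r) := descPochhammer_natDegree _ _
    _ ≤ Fintype.card ι / 2 :=
      (Nat.le_div_iff_mul_le two_pos).2 (mul_comm 2 _ ▸ r.two_mul_card_quotient_le hpair)

theorem integral_prod_comp_eq_blockMoment [MeasurableSpace E] {κ : Type*} {ζ : κ → Ω → E}
    (hindep : iIndepFun ζ μ) (hident : ∀ i, IdentDistrib (ζ i) X μ μ)
    (hφ : ∀ t, Measurable (φ t)) (g : ι → κ) :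
    ∫ ω, ∏ t, φ t (ζ (g t) ω) ∂μ = blockMoment μ X φ (Setoid.ker g) := by
  classical
  set F : Quotient (Setoid.ker g) → E → ℝ := fun q x ↦ ∏ t with Quotient.mk _ t = q, φ t x
  have hF : ∀ q, Measurable (F q) := fun q ↦ Finset.measurable_prod _ fun t _ ↦ hφ t
  have hfactor : ∀ ω, ∏ t, φ t (ζ (g t) ω) = ∏ q, F q (ζ (Setoid.kerLift g q) ω) := fun ω ↦ by
    rw [← prod_fiberwise univ (Quotient.mk (Setoid.ker g))]
    refine prod_congr rfl fun q _ ↦ prod_congr rfl fun t ht ↦ ?_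
    rw [← (mem_filter.1 ht).2, Setoid.kerLift_mk]
  simp_rw [hfactor]
  rw [(hindep.precomp (Setoid.kerLift_injective g)).integral_fun_prod_comp
    (fun q ↦ (hident _).aemeasurable_fst) (fun q ↦ (hF q).aestronglyMeasurable)]
  exact prod_congr rfl fun q _ ↦ ((hident _).comp (hF q)).integral_eq

theorem integrable_fun_prod_of_memLp_card [IsFiniteMeasure μ] {F : ι → Ω → ℝ}
    (hF : ∀ t, MemLp (F t) (Fintype.card ι) μ) : Integrable (fun ω ↦ ∏ t, F t ω) μ := by
  refine (MemLp.prod' fun t _ ↦ hF t).integrable ?_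
  simp [card_univ, ENNReal.mul_inv_le_one]

theorem integral_prod_sum_eq_eval_momentPolynomial [MeasurableSpace E] [DecidableEq ι]
    {ζ : ℕ → Ω → E} (hindep : iIndepFun ζ μ) (hident : ∀ i, IdentDistrib (ζ i) X μ μ)
    (hφ : ∀ t, Measurable (φ t)) (hL : ∀ t, MemLp (fun ω ↦ φ t (X ω)) (Fintype.card ι) μ)
    (N : ℕ) :
    ∫ ω, ∏ t, ∑ i ∈ range N, φ t (ζ i ω) ∂μ = (momentPolynomial μ X φ).eval (N : ℝ) := by
  have := hindep.isProbabilityMeasure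
  have hterm (g : ι → Fin N) : Integrable (fun ω ↦ ∏ t, φ t (ζ (g t) ω)) μ :=
    integrable_fun_prod_of_memLp_card fun t ↦ ((hident _).comp (hφ t)).memLp_iff.2 (hL t)
  calc ∫ ω, ∏ t, ∑ i ∈ range N, φ t (ζ i ω) ∂μ
      = ∫ ω, ∑ g : ι → Fin N, ∏ t, φ t (ζ (g t) ω) ∂μ := by
        simp_rw [← Fin.sum_univ_eq_sum_range, prod_univ_sum, Fintype.piFinset_univ]
    _ = ∑ g : ι → Fin N, blockMoment μ X φ (Setoid.ker g) := by
        rw [integral_finsetSum _ fun g _ ↦ hterm g]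
        exact sum_congr rfl fun g _ ↦
          integral_prod_comp_eq_blockMoment (ζ := fun i : Fin N ↦ ζ i)
            (hindep.precomp Fin.val_injective) (fun i ↦ hident i) hφ g
    _ = (momentPolynomial μ X φ).eval (N : ℝ) := by
        simp [Setoid.sum_comp_ker, momentPolynomial, Polynomial.eval_finsetSum,
          descPochhammer_eval_eq_descFactorial, mul_comm]

end Moments

theorem stmt15_general {Ω : Type*} {mΩ : MeasurableSpace Ω} (μ : Measure Ω)
    (d ℓ : ℕ) (ζ : ℕ → Ω → (Fin d → ℝ))
    (hindep : iIndepFun ζ μ)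
    (hident : ∀ i, IdentDistrib (ζ i) (ζ 0) μ μ)
    (hmean : ∫ ω, ζ 0 ω ∂μ = 0)
    (hLℓ : MemLp (ζ 0) ℓ μ) :
    ∃ R : (Fin ℓ → Fin d) → Polynomial ℝ,
      (∀ f, (R f).natDegree ≤ ℓ / 2) ∧
      ∀ N : ℕ, ℓ ≤ N → ∀ f : Fin ℓ → Fin d,
        ∫ ω, ∏ t : Fin ℓ, (∑ i ∈ Finset.range N, ζ i ω (f t)) ∂μ
          = (R f).eval (N : ℝ) := by
  have := hindep.isProbabilityMeasure
  have hcoord (j : Fin d) : MemLp (fun ω ↦ ζ 0 ω j) (Fintype.card (Fin ℓ)) μ := by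
    simpa using hLℓ.eval j
  refine ⟨fun f ↦ momentPolynomial μ (ζ 0) fun t x ↦ x (f t), fun f ↦ ?_,
    fun N _ f ↦ integral_prod_sum_eq_eval_momentPolynomial hindep hident
      (fun t ↦ measurable_pi_apply (f t)) (fun t ↦ hcoord (f t)) N⟩
  simpa using natDegree_momentPolynomial_le (μ := μ) (X := ζ 0) (φ := fun t x ↦ x (f t))
    fun t ↦ by
      have hint : Integrable (ζ 0) μ := hLℓ.integrable (by exact_mod_cast t.pos)
      rw [← eval_integral (fun j ↦ hint.eval j), hmean, Pi.zero_apply]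

theorem stmt15 {Ω : Type*} {mΩ : MeasurableSpace Ω} (μ : Measure Ω) [IsProbabilityMeasure μ]
    (d ℓ : ℕ) (ζ : ℕ → Ω → (Fin d → ℝ))
    (hmeas : ∀ i, Measurable (ζ i))
    (hindep : iIndepFun ζ μ)
    (hident : ∀ i, IdentDistrib (ζ i) (ζ 0) μ μ)
    (hmean : ∫ ω, ζ 0 ω ∂μ = 0)
    (hLℓ : MemLp (ζ 0) ℓ μ) :
    ∃ R : (Fin ℓ → Fin d) → Polynomial ℝ,
      (∀ f, (R f).natDegree ≤ ℓ / 2) ∧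
      ∀ N : ℕ, ℓ ≤ N → ∀ f : Fin ℓ → Fin d,
        ∫ ω, ∏ t : Fin ℓ, (∑ i ∈ Finset.range N, ζ i ω (f t)) ∂μ
          = (R f).eval (N : ℝ) :=
  stmt15_general (mΩ := mΩ) μ d ℓ ζ hindep hident hmean hLℓ
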